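/- arXiv:2202.10162 — 2 statements merged into one kernel-verified Lean document; each statement's English description precedes it below -/
import Mathlib

section
/- Let T be Birnbaum-Saunders distributed with unit scale and shape φ > 0, and let μ > 0, y ∈ ℕ. Then ∫₀^∞ e^{−μ t} t^y f(t) dt = (e^{1/φ²}/(√(2π)φ)) · [ K_{y+1/2}(√(1+2φ²μ)/φ²) / (1+2φ²μ)^{(y+1/2)/2} + K_{y−1/2}(√(1+2φ²μ)/φ²) / (1+2φ²μ)^{(y−1/2)/2} ], where f is the BS density and K_λ the modified Bessel function of the third kind. -/
open MeasureTheory Real Set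

noncomputable def besselK (l ω : ℝ) : ℝ :=
  (1/2) * ∫ u in Ioi (0:ℝ), u ^ (l - 1) * Real.exp (-(ω/2) * (u + 1/u))

noncomputable def bsDensity (φ t : ℝ) : ℝ :=
  (t ^ (-(1:ℝ)/2) + t ^ (-(3:ℝ)/2)) / (2 * Real.sqrt (2*π) * φ) *
    Real.exp (-(t + 1/t - 2) / (2*φ^2))

/-!
Multiplying the Birnbaum–Saunders density by `e^{-μt} t^y` and collecting the exponent, the
integrand becomes `e^{1/φ²} / (2√(2π)φ)` times the sum of the two generalized inverse Gaussian
kernels `t^{p-1} exp(-(a t + b / t) / 2)` with `p = y ± 1/2`, `a = (1 + 2φ²μ)/φ²`, `b = 1/φ²`.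
The substitution `u = √(a/b) t` turns the integral of such a kernel over `(0, ∞)` into
`2 K_p(√(ab)) / (a/b)^{p/2}`.
-/

/-- Unnormalised density of the generalized inverse Gaussian law `GIG(p, a, b)`. -/
noncomputable def gigKernel (p a b t : ℝ) : ℝ := t ^ (p - 1) * exp (-(a * t + b / t) / 2)

lemma gigKernel_nonneg (p a b : ℝ) {t : ℝ} (ht : 0 ≤ t) : 0 ≤ gigKernel p a b t :=
  mul_nonneg (rpow_nonneg ht _) (exp_nonneg _)

lemma exp_neg_le_factorial_div_pow {x : ℝ} (hx : 0 < x) (n : ℕ) :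
    exp (-x) ≤ n.factorial / x ^ n := by
  rw [exp_neg, inv_le_comm₀ (exp_pos x) (by positivity), inv_div]
  exact pow_div_factorial_le_exp x hx.le n

lemma gigKernel_le_of_le_one (p : ℝ) {a b : ℝ} (ha : 0 ≤ a) (hb : 0 < b) {n : ℕ}
    (hn : 1 - p ≤ n) {t : ℝ} (ht₀ : 0 < t) (ht₁ : t ≤ 1) :
    gigKernel p a b t ≤ n.factorial * (2 / b) ^ n := by
  have hexp : exp (-(a * t + b / t) / 2) ≤ n.factorial / (b / (2 * t)) ^ n := by
    refine (exp_le_exp.2 ?_).trans (exp_neg_le_factorial_div_pow (by positivity) n)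
    have : 0 ≤ a * t := by positivity
    have : b / (2 * t) = b / t / 2 := by ring
    linarith
  calc gigKernel p a b t ≤ t ^ (p - 1) * (n.factorial / (b / (2 * t)) ^ n) := by
        unfold gigKernel; gcongr
    _ = n.factorial * (2 / b) ^ n * t ^ (p - 1 + n) := by
        rw [rpow_add ht₀, rpow_natCast, div_pow, div_pow, mul_pow]; field_simp
    _ ≤ n.factorial * (2 / b) ^ n := by
        exact mul_le_of_le_one_right (by positivity) (rpow_le_one ht₀.le ht₁ (by linarith))

lemma gigKernel_le_of_one_le (p : ℝ) {a b : ℝ} (hb : 0 ≤ b) {t : ℝ} (ht : 1 ≤ t) :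
    gigKernel p a b t ≤ t ^ |p| * exp (-(a / 2) * t ^ (1 : ℝ)) := by
  have ht₀ : 0 < t := zero_lt_one.trans_le ht
  have hexp : -(a * t + b / t) / 2 ≤ -(a / 2) * t ^ (1 : ℝ) := by
    have : 0 ≤ b / t := by positivity
    rw [rpow_one]; linarith
  exact mul_le_mul (rpow_le_rpow_of_exponent_le ht (by linarith [le_abs_self p]))
    (exp_le_exp.2 hexp) (exp_nonneg _) (rpow_nonneg ht₀.le _)

theorem integrableOn_gigKernel (p : ℝ) {a b : ℝ} (ha : 0 < a) (hb : 0 < b) :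
    IntegrableOn (gigKernel p a b) (Ioi 0) := by
  have hmeas : Measurable (gigKernel p a b) := by unfold gigKernel; fun_prop
  have hnear : IntegrableOn (gigKernel p a b) (Ioc 0 1) := by
    refine Measure.integrableOn_of_bounded (M := (⌈1 - p⌉₊).factorial * (2 / b) ^ ⌈1 - p⌉₊)
      measure_Ioc_lt_top.ne hmeas.aestronglyMeasurable ?_
    filter_upwards [ae_restrict_mem measurableSet_Ioc] with t ⟨ht₀, ht₁⟩
    rw [norm_of_nonneg (gigKernel_nonneg p a b ht₀.le)]
    exact gigKernel_le_of_le_one p ha.le hb (Nat.le_ceil _) ht₀ ht₁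
  have hfar : IntegrableOn (gigKernel p a b) (Ioi 1) := by
    refine Integrable.mono' ((integrableOn_rpow_mul_exp_neg_mul_rpow (s := |p|)
      (by linarith [abs_nonneg p]) zero_lt_one (half_pos ha)).mono_set
      (Ioi_subset_Ioi zero_le_one)) hmeas.aestronglyMeasurable ?_
    filter_upwards [ae_restrict_mem measurableSet_Ioi] with t (ht : 1 < t)
    rw [norm_of_nonneg (gigKernel_nonneg p a b (zero_le_one.trans ht.le))]
    exact gigKernel_le_of_one_le p hb.le ht.le
  rw [← Ioc_union_Ioi_eq_Ioi zero_le_one]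
  exact hnear.union hfar

theorem integral_gigKernel (p : ℝ) {a b : ℝ} (ha : 0 < a) (hb : 0 < b) :
    ∫ t in Ioi 0, gigKernel p a b t = 2 * besselK p √(a * b) / (a / b) ^ (p / 2) := by
  set s := √(a / b)
  have hs : 0 < s := sqrt_pos.2 (div_pos ha hb)
  have hsp : s ^ p = (a / b) ^ (p / 2) := by
    rw [show s = (a / b) ^ (1 / 2 : ℝ) from sqrt_eq_rpow _, ← rpow_mul (div_pos ha hb).le]
    ring_nf
  have hωs : √(a * b) * s = a := by
    rw [← sqrt_mul (mul_pos ha hb).le, show a * b * (a / b) = a ^ 2 by field_simp, sqrt_sq ha.le]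
  have hωs' : √(a * b) / s = b := by
    have hs2 : s ^ 2 = a / b := sq_sqrt (div_pos ha hb).le
    calc √(a * b) / s = √(a * b) * s / s ^ 2 := by field_simp
      _ = b := by rw [hωs, hs2]; field_simp
  have hsub := integral_comp_mul_left_Ioi
    (fun u => u ^ (p - 1) * exp (-(√(a * b) / 2) * (u + 1 / u))) 0 hs
  have hg : ∀ t ∈ Ioi (0 : ℝ), (s * t) ^ (p - 1) * exp (-(√(a * b) / 2) * (s * t + 1 / (s * t)))
      = s ^ (p - 1) * gigKernel p a b t := by
    intro t (ht : 0 < t)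
    have hexp : -(√(a * b) / 2) * (s * t + 1 / (s * t))
        = -(√(a * b) * s * t + √(a * b) / s / t) / 2 := by field_simp
    rw [mul_rpow hs.le ht.le, gigKernel, hexp, hωs, hωs']
    ring
  rw [setIntegral_congr_fun measurableSet_Ioi hg, integral_const_mul, mul_zero, smul_eq_mul] at hsub
  have hK : ∫ u in Ioi 0, u ^ (p - 1) * exp (-(√(a * b) / 2) * (u + 1 / u))
      = s ^ p * ∫ t in Ioi 0, gigKernel p a b t := by
    rw [← mul_inv_cancel_left₀ hs.ne' (∫ u in Ioi 0, _), ← hsub, rpow_sub_one hs.ne']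
    field_simp
  rw [besselK, ← hsp, hK]
  field_simp

lemma exp_mul_pow_mul_bsDensity_eq_gigKernel {φ : ℝ} (hφ : φ ≠ 0) (μ : ℝ) (y : ℕ) {t : ℝ}
    (ht : 0 < t) :
    exp (-μ * t) * t ^ y * bsDensity φ t
      = exp (1 / φ ^ 2) / (2 * √(2 * π) * φ) *
        (gigKernel (y + 1 / 2) ((1 + 2 * φ ^ 2 * μ) / φ ^ 2) (1 / φ ^ 2) t
          + gigKernel (y - 1 / 2) ((1 + 2 * φ ^ 2 * μ) / φ ^ 2) (1 / φ ^ 2) t) := by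
  have hexp : exp (-μ * t) * exp (-(t + 1 / t - 2) / (2 * φ ^ 2))
      = exp (1 / φ ^ 2) * exp (-((1 + 2 * φ ^ 2 * μ) / φ ^ 2 * t + 1 / φ ^ 2 / t) / 2) := by
    rw [← exp_add, ← exp_add]; congr 1; field_simp; ring
  have hpow {q r : ℝ} (h : y + q = r) : t ^ y * t ^ q = t ^ r := by
    rw [← h, rpow_add ht, rpow_natCast]
  rw [bsDensity, gigKernel, gigKernel]
  calc _ = (t ^ y * t ^ (-(1 : ℝ) / 2) + t ^ y * t ^ (-(3 : ℝ) / 2)) / (2 * √(2 * π) * φ)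
        * (exp (-μ * t) * exp (-(t + 1 / t - 2) / (2 * φ ^ 2))) := by ring
    _ = _ := by
        rw [hpow (r := y + 1 / 2 - 1) (by ring), hpow (r := y - 1 / 2 - 1) (by ring), hexp]
        ring

theorem bs_laplace_type_integral (φ μ : ℝ) (hφ : 0 < φ) (hμ : 0 < μ) (y : ℕ) :
    ∫ t in Ioi (0:ℝ), Real.exp (-μ * t) * t ^ y * bsDensity φ t
      = Real.exp (1/φ^2) / (Real.sqrt (2*π) * φ) *
        (besselK ((y:ℝ) + 1/2) (Real.sqrt (1 + 2*φ^2*μ) / φ^2) /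
            (1 + 2*φ^2*μ) ^ (((y:ℝ) + 1/2)/2)
         + besselK ((y:ℝ) - 1/2) (Real.sqrt (1 + 2*φ^2*μ) / φ^2) /
            (1 + 2*φ^2*μ) ^ (((y:ℝ) - 1/2)/2)) := by
  set A := 1 + 2 * φ ^ 2 * μ
  have ha : 0 < A / φ ^ 2 := by positivity
  have hb : 0 < 1 / φ ^ 2 := by positivity
  have hω : √(A / φ ^ 2 * (1 / φ ^ 2)) = √A / φ ^ 2 := by
    rw [div_mul_div_comm, mul_one, sqrt_div' _ (by positivity), ← sq, sqrt_sq (by positivity)]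
  have hA : A / φ ^ 2 / (1 / φ ^ 2) = A := by field_simp
  rw [setIntegral_congr_fun measurableSet_Ioi
      fun t ht ↦ exp_mul_pow_mul_bsDensity_eq_gigKernel hφ.ne' μ y ht,
    integral_const_mul,
    integral_add (integrableOn_gigKernel _ ha hb) (integrableOn_gigKernel _ ha hb),
    integral_gigKernel _ ha hb, integral_gigKernel _ ha hb, hω, hA]
  field_simp
end

section
/- In the CPBS model, the joint probability function of the counts Y_{k1},…,Y_{kn_k} in cluster k is p(y_{k1},…,y_{kn_k}) = (e^{1/φ²}/(√(2π)φ)) · (∏_{j=1}^{n_k} μ_{kj}^{y_{kj}}/y_{kj}!) · [ K_{y_k+1/2}(√(1+2φ²μ_k)/φ²)/(1+2φ²μ_k)^{(y_k+1/2)/2} + K_{y_k−1/2}(√(1+2φ²μ_k)/φ²)/(1+2φ²μ_k)^{(y_k−1/2)/2} ], where y_k = Σ_j y_{kj} and μ_k = Σ_j μ_{kj}. -/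
/-
The product of the Poisson likelihoods is `(∏ μⱼ^yⱼ / yⱼ!) t^y e^{-μ t}` with `y = Σ yⱼ`,
`μ = Σ μⱼ`. Multiplying by the Birnbaum–Saunders density, the exponent
`-μ t - (t + 1/t - 2) / (2φ²)` equals `1/φ² - (ω/2)(r t + 1/(r t))` with
`r = √(1 + 2φ²μ)` and `ω = r / φ²`, while the two powers `t^{-1/2}`, `t^{-3/2}` of the density
give `t^{(y ± 1/2) - 1}`. The substitution `u = r t` turns each of the two integrals into
`2 K_{y ± 1/2}(ω) / r^{y ± 1/2}`, and `r^λ = (1 + 2φ²μ)^{λ/2}`.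
-/

open MeasureTheory Real Set

lemma integrableOn_rpow_mul_exp_neg_mul_add_div {p q : ℝ} (hp : 0 < p) (hq : 0 < q) (l : ℝ) :
    IntegrableOn (fun t => t ^ l * exp (-(p * t + q / t))) (Ioi 0) := by
  set n := ⌈-l⌉₊
  -- `exp (-q / t) ≤ n! (t / q) ^ n` kills the singularity of `t ^ l` at `0`.
  have hdom : IntegrableOn (fun t => n.factorial / q ^ n * (t ^ (l + n) * exp (-p * t)))
      (Ioi 0) := by
    have := integrableOn_rpow_mul_exp_neg_mul_rpow (s := l + n) (by linarith [Nat.le_ceil (-l)])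
      one_pos hp
    simp only [rpow_one] at this
    exact this.const_mul _
  refine hdom.mono' (by fun_prop : Measurable _).aestronglyMeasurable ?_
  filter_upwards [self_mem_ae_restrict measurableSet_Ioi] with t (ht : 0 < t)
  have hbound := exp_neg_le_factorial_div_pow (div_pos hq ht) n
  rw [norm_of_nonneg (by positivity), rpow_add ht, rpow_natCast, neg_add, exp_add, neg_mul]
  calc t ^ l * (exp (-(p * t)) * exp (-(q / t)))
      ≤ t ^ l * (exp (-(p * t)) * (n.factorial / (q / t) ^ n)) := by gcongr
    _ = n.factorial / q ^ n * (t ^ l * t ^ n * exp (-(p * t))) := by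
      rw [div_pow]; field_simp

lemma integrableOn_rpow_mul_exp_neg_mul_add_inv (l : ℝ) {ω r : ℝ} (hω : 0 < ω) (hr : 0 < r) :
    IntegrableOn (fun t => t ^ l * exp (-(ω / 2) * (r * t + 1 / (r * t)))) (Ioi 0) := by
  refine (integrableOn_rpow_mul_exp_neg_mul_add_div (p := ω / 2 * r) (q := ω / (2 * r))
    (by positivity) (by positivity) l).congr_fun (fun t (ht : 0 < t) => ?_) measurableSet_Ioi
  field_simp

lemma integral_rpow_mul_exp_neg_mul_add_inv_eq_besselK (l ω : ℝ) {r : ℝ} (hr : 0 < r) :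
    ∫ t in Ioi 0, t ^ (l - 1) * exp (-(ω / 2) * (r * t + 1 / (r * t)))
      = 2 * besselK l ω / r ^ l := by
  have hsub := integral_comp_mul_left_Ioi
    (fun u => u ^ (l - 1) * exp (-(ω / 2) * (u + 1 / u))) 0 hr
  rw [mul_zero, smul_eq_mul] at hsub
  have hscale : ∀ t ∈ Ioi (0:ℝ), t ^ (l - 1) * exp (-(ω / 2) * (r * t + 1 / (r * t)))
      = (r ^ (l - 1))⁻¹ * ((r * t) ^ (l - 1) * exp (-(ω / 2) * (r * t + 1 / (r * t)))) := by
    intro t (ht : 0 < t)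
    rw [mul_rpow hr.le ht.le]
    field_simp
  rw [setIntegral_congr_fun measurableSet_Ioi hscale, integral_const_mul, hsub, besselK,
    rpow_sub_one hr.ne']
  field_simp

lemma prod_exp_neg_mul_mul_pow_div_factorial {ι : Type*} (s : Finset ι) (μ : ι → ℝ) (y : ι → ℕ)
    (t : ℝ) :
    ∏ j ∈ s, exp (-(μ j) * t) * (μ j * t) ^ (y j) / ((y j).factorial : ℝ)
      = (∏ j ∈ s, μ j ^ (y j) / ((y j).factorial : ℝ)) *
          (t ^ (∑ j ∈ s, y j) * exp (-(∑ j ∈ s, μ j) * t)) := by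
  calc ∏ j ∈ s, exp (-(μ j) * t) * (μ j * t) ^ (y j) / ((y j).factorial : ℝ)
      = ∏ j ∈ s, μ j ^ (y j) / ((y j).factorial : ℝ) * (t ^ (y j) * exp (-(μ j) * t)) :=
        Finset.prod_congr rfl fun j _ => by rw [mul_pow]; ring
    _ = _ := by
      rw [Finset.prod_mul_distrib, Finset.prod_mul_distrib, Finset.prod_pow_eq_pow_sum, ← exp_sum,
        ← Finset.sum_mul, Finset.sum_neg_distrib]

lemma pow_mul_exp_neg_mul_mul_bsDensity {φ m t : ℝ} (hφ : φ ≠ 0) (hm : 0 < 1 + 2 * φ ^ 2 * m)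
    (ht : 0 < t) (k : ℕ) :
    t ^ k * exp (-m * t) * bsDensity φ t
      = exp (1 / φ ^ 2) / (2 * √(2 * π) * φ) *
        ((t ^ ((k + 1 / 2 : ℝ) - 1) + t ^ ((k - 1 / 2 : ℝ) - 1)) *
          exp (-(√(1 + 2 * φ ^ 2 * m) / φ ^ 2 / 2) *
            (√(1 + 2 * φ ^ 2 * m) * t + 1 / (√(1 + 2 * φ ^ 2 * m) * t)))) := by
  have hr0 : √(1 + 2 * φ ^ 2 * m) ≠ 0 := (sqrt_pos.mpr hm).ne'
  have hr := sq_sqrt hm.le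
  set r := √(1 + 2 * φ ^ 2 * m)
  have hpow : t ^ k * (t ^ (-(1:ℝ)/2) + t ^ (-(3:ℝ)/2))
      = t ^ ((k + 1 / 2 : ℝ) - 1) + t ^ ((k - 1 / 2 : ℝ) - 1) := by
    rw [← rpow_natCast, mul_add, ← rpow_add ht, ← rpow_add ht]
    ring_nf
  have hexp : -m * t + -(t + 1 / t - 2) / (2 * φ ^ 2) =
      1 / φ ^ 2 + -(r / φ ^ 2 / 2) * (r * t + 1 / (r * t)) := by
    field_simp
    linear_combination t ^ 2 * hr
  have hexp' := congrArg exp hexp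
  rw [exp_add, exp_add] at hexp'
  rw [bsDensity, ← hpow]
  linear_combination t ^ k * (t ^ (-(1:ℝ)/2) + t ^ (-(3:ℝ)/2)) / (2 * √(2 * π) * φ) * hexp'

theorem cpbs_joint_pmf (φ : ℝ) (hφ : 0 < φ) (n : ℕ) (μ : Fin n → ℝ)
    (hμ : ∀ j, 0 < μ j) (y : Fin n → ℕ) :
    (∫ t in Ioi (0:ℝ),
        (∏ j, Real.exp (-(μ j) * t) * (μ j * t) ^ (y j) / (Nat.factorial (y j) : ℝ)) *
          bsDensity φ t)
      = Real.exp (1/φ^2) / (Real.sqrt (2*π) * φ) *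
        (∏ j, (μ j) ^ (y j) / (Nat.factorial (y j) : ℝ)) *
        (besselK ((∑ j, (y j : ℝ)) + 1/2)
            (Real.sqrt (1 + 2*φ^2*(∑ j, μ j)) / φ^2) /
            (1 + 2*φ^2*(∑ j, μ j)) ^ (((∑ j, (y j : ℝ)) + 1/2)/2)
         + besselK ((∑ j, (y j : ℝ)) - 1/2)
            (Real.sqrt (1 + 2*φ^2*(∑ j, μ j)) / φ^2) /
            (1 + 2*φ^2*(∑ j, μ j)) ^ (((∑ j, (y j : ℝ)) - 1/2)/2)) := by
  have hm : 0 < 1 + 2 * φ ^ 2 * ∑ j, μ j := by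
    have := Finset.sum_nonneg fun j (_ : j ∈ Finset.univ) => (hμ j).le
    positivity
  have hr : 0 < √(1 + 2 * φ ^ 2 * ∑ j, μ j) := sqrt_pos.mpr hm
  have hω : 0 < √(1 + 2 * φ ^ 2 * ∑ j, μ j) / φ ^ 2 := by positivity
  rw [← Nat.cast_sum, rpow_div_two_eq_sqrt _ hm.le, rpow_div_two_eq_sqrt _ hm.le]
  rw [setIntegral_congr_fun measurableSet_Ioi fun t (ht : 0 < t) => by
    rw [prod_exp_neg_mul_mul_pow_div_factorial, mul_assoc,
      pow_mul_exp_neg_mul_mul_bsDensity hφ.ne' hm ht, add_mul]]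
  rw [integral_const_mul, integral_const_mul, integral_add
    (integrableOn_rpow_mul_exp_neg_mul_add_inv _ hω hr)
    (integrableOn_rpow_mul_exp_neg_mul_add_inv _ hω hr),
    integral_rpow_mul_exp_neg_mul_add_inv_eq_besselK _ _ hr,
    integral_rpow_mul_exp_neg_mul_add_inv_eq_besselK _ _ hr]
  field_simp
end
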